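/- arXiv:1903.07861 — 5 statements merged into one kernel-verified Lean document; each statement's English description precedes it below -/
import Mathlib

section
/- Let ξ = (ξ_1, ξ_2, …) be an infinite sequence of random variables with values in a standard Borel space S, with empirical distributions η_n = n⁻¹ ∑_{i=1}^n δ_{ξ_i}. If η is a reverse measure-valued martingale with respect to the tail σ-fields 𝒯_n = σ(η_n, η_{n+1}, …), then (ξ_1, ξ_2, ξ_3, ξ_4, …) has the same distribution as (ξ_2, ξ_1, ξ_3, ξ_4, …); i.e., the law of ξ is invariant under the transposition of the first two coordinates. -/
/-!
With `k = 1`, `n = 2` the martingale property reads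
`E[1_A(ξ₀) | 𝒯₂] = η₂(A) = (1_A(ξ₀) + 1_A(ξ₁))/2`, so `P(ξ₀ ∈ A, C) = P(ξ₁ ∈ A, C)` for every
`C ∈ 𝒯₂`. The σ-field `𝒯₂` also contains the number `N` of `ξ₀, ξ₁` lying in a set `B`, and every
`ξₙ` with `n ≥ 2`, since `δ_{ξₙ} = (n+1)η_{n+1} - nη_n`. Splitting `{ξ₀ ∈ A, ξ₁ ∈ B}` into
`{ξ₀ ∈ A, N = 2}` and `{ξ₀ ∈ A \ B, N = 1}` upgrades the one-coordinate identity to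
`P(ξ₀ ∈ A, ξ₁ ∈ B, C) = P(ξ₁ ∈ A, ξ₀ ∈ B, C)`, which on cylinder sets is the invariance of the law
of `ξ` under the transposition.
-/

open MeasureTheory ProbabilityTheory
open scoped ENNReal

/-- The empirical distribution `η_n = n⁻¹ ∑_{i=1}^n δ_{ξ_i}` of the first `n` terms of
the sequence `ξ` (indexed from `0`). -/
noncomputable def empDist {Ω S : Type*} [MeasurableSpace S] (ξ : ℕ → Ω → S) (n : ℕ) (ω : Ω) :
    Measure S :=
  (n : ℝ≥0∞)⁻¹ • ∑ i ∈ Finset.range n, Measure.dirac (ξ i ω)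

/-- The tail σ-field `𝒯_n = σ(η_n, η_{n+1}, …)` generated by the empirical distributions. -/
noncomputable def tailField {Ω S : Type*} [MeasurableSpace S] (ξ : ℕ → Ω → S) (n : ℕ) :
    MeasurableSpace Ω :=
  ⨆ k, ⨆ _ : n ≤ k, MeasurableSpace.comap (empDist ξ k) inferInstance

/-- `η` is a reverse measure-valued martingale: for every bounded measurable `f` and all
`1 ≤ k ≤ n`, `E[η_k f | 𝒯_n] = η_n f` a.s. -/
def IsReverseMVM {Ω S : Type*} [MeasurableSpace Ω] [MeasurableSpace S]
    (P : Measure Ω) (ξ : ℕ → Ω → S) : Prop :=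
  ∀ f : S → ℝ, Measurable f → (∃ C, ∀ x, |f x| ≤ C) →
    ∀ k n : ℕ, 1 ≤ k → k ≤ n →
      P[(fun ω => ∫ x, f x ∂(empDist ξ k ω)) | tailField ξ n]
        =ᵐ[P] fun ω => ∫ x, f x ∂(empDist ξ n ω)

/-- `ξ` is exchangeable: any finite subfamily with distinct indices has the same joint
distribution as the initial segment of the same length. -/
def Exchangeable {Ω S : Type*} [MeasurableSpace Ω] [MeasurableSpace S]
    (P : Measure Ω) (ξ : ℕ → Ω → S) : Prop :=
  ∀ (m : ℕ) (k : Fin m → ℕ), Function.Injective k →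
    Measure.map (fun ω (i : Fin m) => ξ (k i) ω) P
      = Measure.map (fun ω (i : Fin m) => ξ (i : ℕ) ω) P

/-- `ξ` is stationary: the shifted sequence has the same distribution as `ξ`. -/
def Stationary {Ω S : Type*} [MeasurableSpace Ω] [MeasurableSpace S]
    (P : Measure Ω) (ξ : ℕ → Ω → S) : Prop :=
  Measure.map (fun ω (i : ℕ) => ξ (i + 1) ω) P = Measure.map (fun ω (i : ℕ) => ξ i ω) P

/-- `ξ` is a homogeneous Markov sequence with transition kernel `κ`. -/
def IsHomogeneousMarkov {Ω S : Type*} [MeasurableSpace Ω] [MeasurableSpace S]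
    (P : Measure Ω) (ξ : ℕ → Ω → S) : Prop :=
  ∃ κ : Kernel S S, IsMarkovKernel κ ∧
    ∀ n : ℕ, ∀ f : S → ℝ, Measurable f → (∃ C, ∀ x, |f x| ≤ C) →
      P[(fun ω => f (ξ (n + 1) ω)) |
          MeasurableSpace.comap (fun ω (i : Fin (n + 1)) => ξ (i : ℕ) ω) inferInstance]
        =ᵐ[P] fun ω => ∫ y, f y ∂(κ (ξ n ω))

open Finset

section

variable {Ω S : Type*} [MeasurableSpace S] {ξ : ℕ → Ω → S}

theorem natCast_smul_empDist (ξ : ℕ → Ω → S) (n : ℕ) (ω : Ω) :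
    (n : ℝ≥0∞) • empDist ξ n ω = ∑ i ∈ range n, Measure.dirac (ξ i ω) := by
  rcases eq_or_ne n 0 with rfl | hn
  · simp
  · rw [empDist, smul_smul, ENNReal.mul_inv_cancel (by exact_mod_cast hn) (by simp), one_smul]

theorem measurable_empDist [MeasurableSpace Ω] (hξ : ∀ i, Measurable (ξ i)) (n : ℕ) :
    Measurable (empDist ξ n) := by
  refine Measure.measurable_of_measurable_coe _ fun s hs => ?_
  simp only [empDist, Measure.smul_apply, Measure.finsetSum_apply, smul_eq_mul]
  exact (Finset.measurable_sum _ fun i _ =>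
    (Measure.measurable_coe hs).comp (Measure.measurable_dirac.comp (hξ i))).const_mul _

theorem tailField_le [MeasurableSpace Ω] (hξ : ∀ i, Measurable (ξ i)) (k : ℕ) :
    tailField ξ k ≤ ‹MeasurableSpace Ω› :=
  iSup₂_le fun n _ => (measurable_empDist hξ n).comap_le

theorem measurable_tailField_empDist {k n : ℕ} (hkn : k ≤ n) :
    Measurable[tailField ξ k] (empDist ξ n) :=
  Measurable.of_comap_le (le_iSup₂ (f := fun n (_ : k ≤ n) =>
    MeasurableSpace.comap (empDist ξ n) inferInstance) n hkn)

theorem measurable_tailField_sum_dirac_apply {k n : ℕ} (hkn : k ≤ n) {A : Set S}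
    (hA : MeasurableSet A) :
    Measurable[tailField ξ k] fun ω : Ω => (∑ i ∈ range n, Measure.dirac (ξ i ω)) A := by
  simp only [← natCast_smul_empDist ξ n, Measure.smul_apply, smul_eq_mul]
  exact ((Measure.measurable_coe hA).comp (measurable_tailField_empDist hkn)).const_mul _

theorem measurable_tailField {k n : ℕ} (hkn : k ≤ n) : Measurable[tailField ξ k] (ξ n) := by
  intro A hA
  have h : ξ n ⁻¹' A = {ω | (∑ i ∈ range n, Measure.dirac (ξ i ω)) A
      < (∑ i ∈ range (n + 1), Measure.dirac (ξ i ω)) A} := by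
    ext ω
    have hfin : (∑ i ∈ range n, Measure.dirac (ξ i ω)) A ≠ ∞ := by
      rw [Measure.finsetSum_apply]
      exact ENNReal.sum_ne_top.2 fun i _ => measure_ne_top _ _
    rw [Set.mem_ofPred_eq, sum_range_succ, Measure.add_apply, Measure.dirac_apply' _ hA]
    by_cases hω : ξ n ω ∈ A
    · simpa [hω] using ENNReal.lt_add_right hfin one_ne_zero
    · simp [hω]
  rw [h]
  exact measurableSet_lt (measurable_tailField_sum_dirac_apply hkn hA)
    (measurable_tailField_sum_dirac_apply (by omega) hA)

theorem integral_empDist {f : S → ℝ} (hf : Measurable f) (n : ℕ) (ω : Ω) :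
    ∫ x, f x ∂empDist ξ n ω = (n : ℝ)⁻¹ * ∑ i ∈ range n, f (ξ i ω) := by
  rw [empDist, integral_smul_measure, integral_finsetSum_measure fun i _ =>
    integrable_dirac' hf.stronglyMeasurable enorm_lt_top]
  simp [integral_dirac' f _ hf.stronglyMeasurable]

theorem measure_preimage_zero_inter_eq_preimage_one [MeasurableSpace Ω] {P : Measure Ω}
    [IsFiniteMeasure P]
    (hξ : ∀ i, Measurable (ξ i)) (hmart : IsReverseMVM P ξ) {A : Set S} (hA : MeasurableSet A)
    {C : Set Ω} (hC : MeasurableSet[tailField ξ 2] C) :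
    P (ξ 0 ⁻¹' A ∩ C) = P (ξ 1 ⁻¹' A ∩ C) := by
  set f : S → ℝ := A.indicator 1
  have hf : Measurable f := measurable_const.indicator hA
  have hfC : ∀ x, |f x| ≤ 1 := fun x => by by_cases hx : x ∈ A <;> simp [f, hx]
  have hint : ∀ j, Integrable (fun ω => f (ξ j ω)) P := fun j =>
    (integrable_const 1).indicator (hξ j hA)
  have hsetIntegral : ∀ j, ∫ ω in C, f (ξ j ω) ∂P = P.real (ξ j ⁻¹' A ∩ C) := fun j => by
    rw [← measureReal_restrict_apply (hξ j hA), ← integral_indicator_one (hξ j hA)]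
    rfl
  have hcond := hmart f hf ⟨1, hfC⟩ 1 2 le_rfl one_le_two
  simp only [integral_empDist hf, sum_range_succ, sum_range_zero, zero_add, Nat.cast_one, inv_one,
    one_mul, Nat.cast_ofNat] at hcond
  have h := setIntegral_condExp (tailField_le hξ 2) (hint 0) hC
  rw [setIntegral_congr_ae (tailField_le hξ 2 _ hC) (hcond.mono fun _ h _ => h),
    integral_const_mul, integral_add (hint 0).restrict (hint 1).restrict, hsetIntegral,
    hsetIntegral] at h
  rw [← measureReal_eq_measureReal_iff]
  linarith

theorem mem_and_mem_iff_dirac_add_dirac {A B : Set S} (hB : MeasurableSet B) (a b : S) :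
    a ∈ A ∧ b ∈ B ↔ a ∈ A ∧ (Measure.dirac a + Measure.dirac b) B = 2 ∨
      a ∈ A \ B ∧ (Measure.dirac a + Measure.dirac b) B = 1 := by
  by_cases ha : a ∈ B <;> by_cases hb : b ∈ B <;> norm_num [Measure.dirac_apply' _ hB, ha, hb]

theorem measure_preimage_swap_inter [MeasurableSpace Ω] {P : Measure Ω} [IsFiniteMeasure P]
    (hξ : ∀ i, Measurable (ξ i)) (hmart : IsReverseMVM P ξ) {A B : Set S} (hA : MeasurableSet A)
    (hB : MeasurableSet B) {C : Set Ω} (hC : MeasurableSet[tailField ξ 2] C) :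
    P (ξ 1 ⁻¹' A ∩ ξ 0 ⁻¹' B ∩ C) = P (ξ 0 ⁻¹' A ∩ ξ 1 ⁻¹' B ∩ C) := by
  set N : Ω → ℝ≥0∞ := fun ω => (∑ i ∈ range 2, Measure.dirac (ξ i ω)) B
  have hlevel : ∀ c, MeasurableSet[tailField ξ 2] (N ⁻¹' {c} ∩ C) := fun c =>
    (measurable_tailField_sum_dirac_apply le_rfl hB (measurableSet_singleton c)).inter hC
  have hsplit : ∀ i j, (∀ ω, N ω = (Measure.dirac (ξ i ω) + Measure.dirac (ξ j ω)) B) →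
      P (ξ i ⁻¹' A ∩ ξ j ⁻¹' B ∩ C)
        = P (ξ i ⁻¹' A ∩ (N ⁻¹' {2} ∩ C)) + P (ξ i ⁻¹' (A \ B) ∩ (N ⁻¹' {1} ∩ C)) := by
    intro i j hN
    rw [← measure_union _ ((hξ i (hA.diff hB)).inter (tailField_le hξ 2 _ (hlevel 1)))]
    · congr 1
      ext ω
      simp only [Set.mem_inter_iff, Set.mem_union, Set.mem_preimage, Set.mem_singleton_iff, hN]
      have := mem_and_mem_iff_dirac_add_dirac (A := A) hB (ξ i ω) (ξ j ω)
      tauto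
    · refine Set.disjoint_left.2 fun ω h2 h1 => ?_
      have : (2 : ℝ≥0∞) = 1 := h2.2.1.symm.trans h1.2.1
      norm_num at this
  have hN : ∀ ω, N ω = (Measure.dirac (ξ 0 ω) + Measure.dirac (ξ 1 ω)) B := fun ω => by
    simp [N, sum_range_succ]
  rw [hsplit 1 0 fun ω => by rw [hN, add_comm], hsplit 0 1 hN,
    measure_preimage_zero_inter_eq_preimage_one hξ hmart hA (hlevel 2),
    measure_preimage_zero_inter_eq_preimage_one hξ hmart (hA.diff hB) (hlevel 1)]

theorem measure_preimage_pi_swap [MeasurableSpace Ω] {P : Measure Ω} [IsFiniteMeasure P]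
    (hξ : ∀ i, Measurable (ξ i)) (hmart : IsReverseMVM P ξ) (s : Finset ℕ) {t : ℕ → Set S}
    (ht : ∀ i, MeasurableSet (t i)) :
    P ((fun ω i => ξ (Equiv.swap 0 1 i) ω) ⁻¹' (s : Set ℕ).pi t)
      = P ((fun ω i => ξ i ω) ⁻¹' (s : Set ℕ).pi t) := by
  set A : ℕ → Set S := fun j => {y | j ∈ s → y ∈ t j}
  have hA : ∀ j, MeasurableSet (A j) := fun j => by by_cases hj : j ∈ s <;> simp [A, hj, ht]
  set C : Set Ω := ⋂ i ∈ s.filter (2 ≤ ·), ξ i ⁻¹' t i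
  have hC : MeasurableSet[tailField ξ 2] C := Finset.measurableSet_biInter _ fun i hi =>
    measurable_tailField (Finset.mem_filter.1 hi).2 (ht i)
  have hpi : ∀ x : ℕ → S,
      x ∈ (s : Set ℕ).pi t ↔ x 0 ∈ A 0 ∧ x 1 ∈ A 1 ∧ ∀ i ∈ s, 2 ≤ i → x i ∈ t i := by
    intro x
    refine ⟨fun h => ⟨fun h0 => h 0 h0, fun h1 => h 1 h1, fun i hi _ => h i hi⟩, ?_⟩
    rintro ⟨h0, h1, h2⟩ (_ | _ | i) hi
    exacts [h0 hi, h1 hi, h2 _ hi (by omega)]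
  have hswap : ∀ i, 2 ≤ i → Equiv.swap 0 1 i = i := fun i hi =>
    Equiv.swap_apply_of_ne_of_ne (by omega) (by omega)
  have e1 : (fun ω i => ξ (Equiv.swap 0 1 i) ω) ⁻¹' (s : Set ℕ).pi t
      = ξ 1 ⁻¹' A 0 ∩ ξ 0 ⁻¹' A 1 ∩ C := by
    ext ω
    simp +contextual [hpi, C, hswap, and_assoc]
  have e2 : (fun ω i => ξ i ω) ⁻¹' (s : Set ℕ).pi t = ξ 0 ⁻¹' A 0 ∩ ξ 1 ⁻¹' A 1 ∩ C := by
    ext ω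
    simp [hpi, C, and_assoc]
  rw [e1, e2]
  exact measure_preimage_swap_inter hξ hmart (hA 0) (hA 1) hC

end

theorem map_swap_first_two_of_isReverseMVM_general
    {Ω S : Type*} [MeasurableSpace Ω] [MeasurableSpace S]
    (P : Measure Ω) [IsProbabilityMeasure P] (ξ : ℕ → Ω → S)
    (hmeas : ∀ i, Measurable (ξ i)) (hmart : IsReverseMVM P ξ) :
    Measure.map (fun ω (i : ℕ) => ξ (Equiv.swap 0 1 i) ω) P
      = Measure.map (fun ω (i : ℕ) => ξ i ω) P := by
  have hXswap : Measurable fun ω (i : ℕ) => ξ (Equiv.swap 0 1 i) ω :=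
    measurable_pi_lambda _ fun i => hmeas _
  have hX : Measurable fun ω (i : ℕ) => ξ i ω := measurable_pi_lambda _ hmeas
  refine ext_of_generate_finite _ generateFrom_squareCylinders.symm
    (isPiSystem_squareCylinders (fun _ => MeasurableSpace.isPiSystem_measurableSet)
      fun _ => MeasurableSet.univ) ?_ ?_
  · rintro _ ⟨s, t, ht, rfl⟩
    have ht' : ∀ i, MeasurableSet (t i) := fun i => ht i trivial
    have hcyl := MeasurableSet.pi s.countable_toSet fun i _ => ht' i
    rw [Measure.map_apply hXswap hcyl, Measure.map_apply hX hcyl]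
    exact measure_preimage_pi_swap hmeas hmart s ht'
  · rw [Measure.map_apply hXswap .univ, Measure.map_apply hX .univ]
    rfl

/-- If the empirical distributions of an infinite sequence in a standard
Borel space form a reverse measure-valued martingale, then the law of the sequence is
invariant under transposing the first two coordinates. -/
theorem map_swap_first_two_of_isReverseMVM
    {Ω S : Type*} [MeasurableSpace Ω] [MeasurableSpace S] [StandardBorelSpace S]
    (P : Measure Ω) [IsProbabilityMeasure P] (ξ : ℕ → Ω → S)
    (hmeas : ∀ i, Measurable (ξ i)) (hmart : IsReverseMVM P ξ) :
    Measure.map (fun ω (i : ℕ) => ξ (Equiv.swap 0 1 i) ω) P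
      = Measure.map (fun ω (i : ℕ) => ξ i ω) P :=
  map_swap_first_two_of_isReverseMVM_general P ξ hmeas hmart
end

section
/- Let α be a random variable taking the values 1, 0, −1 each with probability 1/3, let (ϑ_n)_{n ≥ 1} be an i.i.d. sequence of Uniform(0,1) random variables independent of α, and define f(a,b) = 1 if a = −1; f(a,b) = 0 if a = 0; f(a,b) = 1 if a = 1 and b < 1/2; f(a,b) = 2 if a = 1 and b ≥ 1/2; set ξ_n = f(α, ϑ_n). Then for every n ≥ 2, the conditional probability P(ξ_1 = 1 | ξ_2 = ξ_3 = ⋯ = ξ_n = 1) equals (2^n + 1)/(2^n + 2); in particular this quantity depends on n, so the exchangeable sequence ξ is not a Markov sequence. -/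
/-!
Conditionally on `α = -1` every `ξ_n` equals `1`, on `α = 0` none does, and on `α = 1` the `ξ_n`
are independent fair coins. Hence `P(ξ_i = 1 for all i ∈ I) = (1 + 2^{-|I|}) / 3` for every
nonempty finite `I`, and the conditional probability is a ratio of two such numbers.

For a Markov sequence, the conditional expectation of `1{ξ_{n+1} ∈ s}` given `ξ_n` is a function
of `ξ_n` (Doob–Dynkin), hence constant on `{ξ_n = x}`; integrating it over `{ξ_n = x}` and over an
event `E ⊆ {ξ_n = x}` of `σ(ξ_0, …, ξ_n)` gives
`P({ξ_{n+1} ∈ s} ∩ E) P(ξ_n = x) = P(ξ_{n+1} ∈ s, ξ_n = x) P(E)`. With `n = x = 1`, `s = {1}` and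
`E = {ξ_0 = ξ_1 = 1}` this would force `P(ξ_2 = 1 | ξ_0 = ξ_1 = 1) = 9/10` to equal
`P(ξ_2 = 1 | ξ_1 = 1) = 5/6`.
-/

open MeasureTheory ProbabilityTheory
open scoped ENNReal

/-- The function `f` of the example: `f(a,b) = 1` if `a = -1`; `0` if `a = 0`;
`1` if `a = 1` and `b < 1/2`; `2` if `a = 1` and `b ≥ 1/2`. -/
noncomputable def fEx (a : ℤ) (b : ℝ) : ℤ :=
  if a = -1 then 1 else if a = 0 then 0 else if b < 1 / 2 then 1 else 2

/-- `ξ` satisfies the (possibly inhomogeneous) Markov property with respect to its natural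
filtration: the conditional expectation of any bounded measurable function of `ξ_{n+1}`
given `σ(ξ_1, …, ξ_n)` only depends on `ξ_n`. -/
def IsMarkovSeq {Ω S : Type*} [MeasurableSpace Ω] [MeasurableSpace S]
    (P : Measure Ω) (ξ : ℕ → Ω → S) : Prop :=
  ∀ n : ℕ, ∀ f : S → ℝ, Measurable f → (∃ C, ∀ x, |f x| ≤ C) →
    P[(fun ω => f (ξ (n + 1) ω)) |
        MeasurableSpace.comap (fun ω (i : Fin (n + 1)) => ξ (i : ℕ) ω) inferInstance]
      =ᵐ[P] P[(fun ω => f (ξ (n + 1) ω)) | MeasurableSpace.comap (ξ n) inferInstance]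

open Set

namespace ProbabilityTheory

variable {Ω : Type*} [MeasurableSpace Ω] {P : Measure Ω}

lemma IndepFun.measureReal_inter_preimage_eq_mul {β γ : Type*} [MeasurableSpace β]
    [MeasurableSpace γ] {f : Ω → β} {g : Ω → γ} (h : IndepFun f g P) {s : Set β} {t : Set γ}
    (hs : MeasurableSet s) (ht : MeasurableSet t) :
    P.real (f ⁻¹' s ∩ g ⁻¹' t) = P.real (f ⁻¹' s) * P.real (g ⁻¹' t) := by
  simp only [measureReal_def, h.measure_inter_preimage_eq_mul s t hs ht, ENNReal.toReal_mul]

lemma iIndepFun.measureReal_iInter_preimage_eq_prod {ι β : Type*} [MeasurableSpace β]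
    {f : ι → Ω → β} (h : iIndepFun f P) (I : Finset ι) {s : ι → Set β}
    (hs : ∀ i ∈ I, MeasurableSet (s i)) :
    P.real (⋂ i ∈ I, f i ⁻¹' s i) = ∏ i ∈ I, P.real (f i ⁻¹' s i) := by
  simp only [measureReal_def, h.measure_inter_preimage_eq_mul I hs, ENNReal.toReal_prod]

end ProbabilityTheory

section Markov

variable {Ω S : Type*} [MeasurableSpace Ω] [MeasurableSpace S] {P : Measure Ω}

lemma IsMarkovSeq.measureReal_inter_mul_eq [MeasurableSingletonClass S] [IsFiniteMeasure P]
    {ξ : ℕ → Ω → S}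
    (hM : IsMarkovSeq P ξ) (hξ : ∀ n, Measurable (ξ n)) (n : ℕ) {s : Set S}
    (hs : MeasurableSet s) (x : S) {E : Set Ω}
    (hE : MeasurableSet[MeasurableSpace.comap (fun ω (i : Fin (n + 1)) => ξ i ω) inferInstance] E)
    (hEx : E ⊆ ξ n ⁻¹' {x}) :
    P.real (ξ (n + 1) ⁻¹' s ∩ E) * P.real (ξ n ⁻¹' {x})
      = P.real (ξ (n + 1) ⁻¹' s ∩ ξ n ⁻¹' {x}) * P.real E := by
  set F : Ω → ℝ := fun ω => s.indicator 1 (ξ (n + 1) ω)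
  have hF_int : Integrable F P := (integrable_const 1).indicator (hξ _ hs)
  have hF_setIntegral (t : Set Ω) :
      ∫ ω in t, F ω ∂P = P.real (ξ (n + 1) ⁻¹' s ∩ t) := by
    rw [show F = (ξ (n + 1) ⁻¹' s).indicator 1 from rfl, integral_indicator_one (hξ _ hs),
      measureReal_restrict_apply (hξ _ hs)]
  have hmarkov := hM n (s.indicator 1) (measurable_const.indicator hs)
    ⟨1, fun y => by by_cases hy : y ∈ s <;> simp [hy]⟩
  have hpast := (measurable_pi_lambda _ fun i : Fin (n + 1) => hξ i).comap_le
  have hpresent := (hξ n).comap_le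
  obtain ⟨h, -, hh⟩ :=
    (stronglyMeasurable_condExp (m := MeasurableSpace.comap (ξ n) inferInstance) (f := F)
      (μ := P)).measurable.exists_eq_measurable_comp
  have hconst {t : Set Ω} (ht : MeasurableSet t) (htx : t ⊆ ξ n ⁻¹' {x}) :
      ∫ ω in t, h (ξ n ω) ∂P = P.real t * h x := by
    rw [setIntegral_congr_fun ht fun ω hω => congrArg h (htx hω), setIntegral_const, smul_eq_mul]
  have hB : P.real (ξ (n + 1) ⁻¹' s ∩ ξ n ⁻¹' {x}) = P.real (ξ n ⁻¹' {x}) * h x := by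
    rw [← hF_setIntegral,
      ← setIntegral_condExp hpresent hF_int ⟨{x}, measurableSet_singleton x, rfl⟩, hh]
    exact hconst (hξ n (measurableSet_singleton x)) subset_rfl
  have hE' : P.real (ξ (n + 1) ⁻¹' s ∩ E) = P.real E * h x := by
    rw [← hF_setIntegral, ← setIntegral_condExp hpast hF_int hE,
      integral_congr_ae (ae_restrict_of_ae hmarkov), hh]
    exact hconst (hpast _ hE) hEx
  rw [hB, hE']
  ring

end Markov

lemma measureReal_preimage_Iio_half {Ω : Type*} [MeasurableSpace Ω] {P : Measure Ω}
    {X : Ω → ℝ} (hX : Measurable X) (hunif : P.map X = volume.restrict (Ioo 0 1)) :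
    P.real (X ⁻¹' Iio (1 / 2)) = 1 / 2 := by
  rw [← map_measureReal_apply hX measurableSet_Iio, hunif,
    measureReal_restrict_apply measurableSet_Iio, Iio_inter_Ioo, Real.volume_real_Ioo_of_le] <;>
    norm_num

lemma fEx_eq_one_iff {a : ℤ} {b : ℝ} : fEx a b = 1 ↔ a = -1 ∨ (a ≠ 0 ∧ b < 1 / 2) := by
  unfold fEx
  split_ifs <;> simp_all

lemma measurable_fEx {Ω : Type*} [MeasurableSpace Ω] {α : Ω → ℤ} {t : Ω → ℝ}
    (hα : Measurable α) (ht : Measurable t) : Measurable fun ω => fEx (α ω) (t ω) := by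
  unfold fEx
  exact .ite (measurableSet_eq_fun hα measurable_const) measurable_const
    (.ite (measurableSet_eq_fun hα measurable_const) measurable_const
      (.ite (measurableSet_lt ht measurable_const) measurable_const measurable_const))

lemma setOf_forall_fEx_eq_one {Ω : Type*} (α : Ω → ℤ) (ϑ : ℕ → Ω → ℝ) {I : Finset ℕ}
    (hI : I.Nonempty) :
    {ω | ∀ i ∈ I, fEx (α ω) (ϑ i ω) = 1}
      = α ⁻¹' {-1} ∪ (α ⁻¹' {-1, 0}ᶜ ∩ ⋂ i ∈ I, ϑ i ⁻¹' Iio (1 / 2)) := by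
  ext ω
  obtain ⟨i₀, hi₀⟩ := hI
  simp only [fEx_eq_one_iff, mem_ofPred_eq, mem_union, mem_preimage, mem_inter_iff,
    mem_compl_iff, mem_insert_iff, mem_singleton_iff, mem_iInter, mem_Iio]
  grind

lemma measureReal_forall_fEx_eq_one {Ω : Type*} [MeasurableSpace Ω] {P : Measure Ω}
    [IsFiniteMeasure P] {α : Ω → ℤ} {ϑ : ℕ → Ω → ℝ}
    (hαmeas : Measurable α) (hϑmeas : ∀ n, Measurable (ϑ n))
    (hα : Measure.map α P
      = (3 : ℝ≥0∞)⁻¹ • (Measure.dirac 1 + Measure.dirac 0 + Measure.dirac (-1)))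
    (hϑ : ∀ n, Measure.map (ϑ n) P = volume.restrict (Ioo (0 : ℝ) 1))
    (hϑindep : iIndepFun ϑ P) (hindep : IndepFun α (fun ω (n : ℕ) => ϑ n ω) P)
    {I : Finset ℕ} (hI : I.Nonempty) :
    P.real {ω | ∀ i ∈ I, fEx (α ω) (ϑ i ω) = 1} = (1 + 2⁻¹ ^ I.card) / 3 := by
  have hα_real (s : Set ℤ) : P.real (α ⁻¹' s) = (Measure.map α P).real s :=
    (map_measureReal_apply hαmeas .of_discrete).symm
  have hα_neg_one : P.real (α ⁻¹' {-1}) = 3⁻¹ := by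
    rw [hα_real, hα]
    simp [measureReal_def]
  have hα_one : P.real (α ⁻¹' {-1, 0}ᶜ) = 3⁻¹ := by
    rw [hα_real, hα]
    simp [measureReal_def]
  have hϑ_half : P.real (⋂ i ∈ I, ϑ i ⁻¹' Iio (1 / 2)) = 2⁻¹ ^ I.card := by
    rw [hϑindep.measureReal_iInter_preimage_eq_prod I fun _ _ => measurableSet_Iio,
      Finset.prod_congr rfl fun i _ => measureReal_preimage_Iio_half (hϑmeas i) (hϑ i),
      Finset.prod_const, one_div]
  have hC : MeasurableSet (⋂ i ∈ I, ϑ i ⁻¹' Iio (1 / 2 : ℝ)) :=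
    .biInter I.countable_toSet fun i _ => hϑmeas i measurableSet_Iio
  have hindep_half : P.real (α ⁻¹' {-1, 0}ᶜ ∩ ⋂ i ∈ I, ϑ i ⁻¹' Iio (1 / 2))
      = P.real (α ⁻¹' {-1, 0}ᶜ) * P.real (⋂ i ∈ I, ϑ i ⁻¹' Iio (1 / 2)) := by
    simpa only [preimage_iInter₂, preimage_preimage] using
      hindep.measureReal_inter_preimage_eq_mul .of_discrete
        (t := ⋂ i ∈ I, (fun g : ℕ → ℝ => g i) ⁻¹' Iio (1 / 2))
        (.biInter I.countable_toSet fun i _ => measurable_pi_apply i measurableSet_Iio)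
  rw [setOf_forall_fEx_eq_one α ϑ hI, measureReal_union _ ((hαmeas .of_discrete).inter hC),
    hindep_half, hϑ_half, hα_neg_one, hα_one]
  · ring
  · exact disjoint_left.2 fun ω h₁ h₂ => h₂.1 (Or.inl h₁)

lemma ofReal_div_ofReal_one_add_inv_two_pow (m : ℕ) :
    ENNReal.ofReal ((1 + 2⁻¹ ^ (m + 1)) / 3) / ENNReal.ofReal ((1 + 2⁻¹ ^ m) / 3)
      = (2 ^ (m + 1) + 1) / (2 ^ (m + 1) + 2) := by
  have hreal : (1 + (2 : ℝ)⁻¹ ^ (m + 1)) / 3 / ((1 + 2⁻¹ ^ m) / 3)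
      = (2 ^ (m + 1) + 1) / (2 ^ (m + 1) + 2) := by
    rw [inv_pow, inv_pow, pow_succ]
    field_simp
  rw [← ENNReal.ofReal_div_of_pos (by positivity), hreal, ENNReal.ofReal_div_of_pos (by positivity)]
  norm_cast

/-- With `α` uniform on `{1, 0, -1}`, `(ϑ_n)` i.i.d. `Uniform(0,1)`
independent of `α`, and `ξ_n = f(α, ϑ_n)` (indexed from `0`), for every `n ≥ 2` the
conditional probability `P(ξ_1 = 1 | ξ_2 = ⋯ = ξ_n = 1)` equals `(2^n + 1)/(2^n + 2)`;
in particular, since this depends on `n`, the exchangeable sequence `ξ` is not Markov. -/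
theorem condProb_fEx_and_not_markov
    {Ω : Type*} [MeasurableSpace Ω] (P : Measure Ω) [IsProbabilityMeasure P]
    (α : Ω → ℤ) (ϑ : ℕ → Ω → ℝ)
    (hαmeas : Measurable α) (hϑmeas : ∀ n, Measurable (ϑ n))
    (hα : Measure.map α P
      = (3 : ℝ≥0∞)⁻¹ • (Measure.dirac 1 + Measure.dirac 0 + Measure.dirac (-1)))
    (hϑ : ∀ n, Measure.map (ϑ n) P = volume.restrict (Set.Ioo (0 : ℝ) 1))
    (hϑindep : iIndepFun ϑ P)
    (hindep : IndepFun α (fun ω (n : ℕ) => ϑ n ω) P) :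
    (∀ n : ℕ, 2 ≤ n →
      P ({ω | fEx (α ω) (ϑ 0 ω) = 1} ∩ {ω | ∀ i, 1 ≤ i → i < n → fEx (α ω) (ϑ i ω) = 1})
          / P {ω | ∀ i, 1 ≤ i → i < n → fEx (α ω) (ϑ i ω) = 1}
        = ((2 : ℝ≥0∞) ^ n + 1) / ((2 : ℝ≥0∞) ^ n + 2)) ∧
    ¬ IsMarkovSeq P (fun n ω => fEx (α ω) (ϑ n ω)) := by
  have hval {I : Finset ℕ} (hI : I.Nonempty) {s : Set Ω}
      (hs : s = {ω | ∀ i ∈ I, fEx (α ω) (ϑ i ω) = 1}) : P.real s = (1 + 2⁻¹ ^ I.card) / 3 :=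
    hs ▸ measureReal_forall_fEx_eq_one hαmeas hϑmeas hα hϑ hϑindep hindep hI
  refine ⟨fun n hn => ?_, fun hM => ?_⟩
  · obtain ⟨m, rfl⟩ : ∃ m, n = m + 1 := ⟨n - 1, by omega⟩
    rw [← ofReal_measureReal, ← ofReal_measureReal,
      hval (I := Finset.range (m + 1)) (by simp) (by ext; simp; grind),
      hval (I := Finset.Ico 1 (m + 1)) (by simp; omega) (by ext; simp),
      Finset.card_range, Nat.card_Ico, Nat.add_sub_cancel, ofReal_div_ofReal_one_add_inv_two_pow]
  · set ξ : ℕ → Ω → ℤ := fun n ω => fEx (α ω) (ϑ n ω)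
    have hE : MeasurableSet[MeasurableSpace.comap (fun ω (i : Fin 2) => ξ i ω) inferInstance]
        (ξ 0 ⁻¹' {1} ∩ ξ 1 ⁻¹' {1}) :=
      ⟨{v | v 0 = 1} ∩ {v | v 1 = 1}, .of_discrete, rfl⟩
    have h := hM.measureReal_inter_mul_eq (fun n => measurable_fEx hαmeas (hϑmeas n)) 1
      (measurableSet_singleton 1) 1 hE inter_subset_right
    rw [hval (I := {0, 1, 2}) (by simp) (by ext; simp [ξ]; tauto),
      hval (I := {1}) (by simp) (by ext; simp [ξ]),
      hval (I := {1, 2}) (by simp) (by ext; simp [ξ]; tauto),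
      hval (I := {0, 1}) (by simp) (by ext; simp [ξ])] at h
    norm_num at h
end

section
/- Let X : ℕ × ℕ → S be a finite or infinite separately exchangeable random matrix with values in a standard Borel space S, with empirical distributions η_{n,m} = (nm)⁻¹ ∑_{i ≤ n} ∑_{j ≤ m} δ_{X_{i,j}}. Then η is a reverse measure-valued martingale on ℕ²: for every bounded measurable f : S → ℝ and all k ≤ n, l ≤ m, E[η_{k,l} f | 𝒯_{n,m}] = η_{n,m} f almost surely, where 𝒯_{n,m} = σ(η_{u,v} : u ≥ n, v ≥ m). -/
open MeasureTheory ProbabilityTheory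
open scoped ENNReal

/-- The empirical distribution `η_{n,m} = (nm)⁻¹ ∑_{i ≤ n} ∑_{j ≤ m} δ_{X_{i,j}}` of the upper
left `n × m` corner of the random matrix `X` (indexed from `0`). -/
noncomputable def empDist2 {Ω S : Type*} [MeasurableSpace S] (X : ℕ → ℕ → Ω → S)
    (n m : ℕ) (ω : Ω) : Measure S :=
  ((n * m : ℕ) : ℝ≥0∞)⁻¹ •
    ∑ i ∈ Finset.range n, ∑ j ∈ Finset.range m, Measure.dirac (X i j ω)

/-- The σ-field `𝒯_{n,m} = σ(η_{u,v} : u ≥ n, v ≥ m)`. -/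
noncomputable def tailField2 {Ω S : Type*} [MeasurableSpace S] (X : ℕ → ℕ → Ω → S)
    (n m : ℕ) : MeasurableSpace Ω :=
  ⨆ u, ⨆ _ : n ≤ u, ⨆ v, ⨆ _ : m ≤ v, MeasurableSpace.comap (empDist2 X u v) inferInstance

/-- `η_{·,·}` is a reverse measure-valued martingale on `ℕ²`: for bounded measurable `f` and
all `1 ≤ k ≤ n`, `1 ≤ l ≤ m`, `E[η_{k,l} f | 𝒯_{n,m}] = η_{n,m} f` a.s. -/
def IsReverseMVM2 {Ω S : Type*} [MeasurableSpace Ω] [MeasurableSpace S]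
    (P : Measure Ω) (X : ℕ → ℕ → Ω → S) : Prop :=
  ∀ f : S → ℝ, Measurable f → (∃ C, ∀ x, |f x| ≤ C) →
    ∀ k l n m : ℕ, 1 ≤ k → k ≤ n → 1 ≤ l → l ≤ m →
      P[(fun ω => ∫ x, f x ∂(empDist2 X k l ω)) | tailField2 X n m]
        =ᵐ[P] fun ω => ∫ x, f x ∂(empDist2 X n m ω)

/-- `X` is separately exchangeable: its law is invariant under arbitrary permutations of the
rows and of the columns. -/
def SepExchangeable {Ω S : Type*} [MeasurableSpace Ω] [MeasurableSpace S]
    (P : Measure Ω) (X : ℕ → ℕ → Ω → S) : Prop :=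
  ∀ p q : Equiv.Perm ℕ,
    Measure.map (fun ω (ij : ℕ × ℕ) => X (p ij.1) (q ij.2) ω) P
      = Measure.map (fun ω (ij : ℕ × ℕ) => X ij.1 ij.2 ω) P

/-!
For a tail event `A ∈ 𝒯_{n,m}` and `i < n`, `j < m`, swapping rows `0, i` and columns `0, j`
preserves the law of `X` and leaves every `η_{u,v}` with `u ≥ n`, `v ≥ m` unchanged, so
`E[f(X_{i,j}); A] = E[f(X_{0,0}); A]`. Averaging over the corner gives
`E[η_{u,v} f; A] = E[f(X_{0,0}); A]` for all `u ≤ n`, `v ≤ m`, and since `η_{n,m} f` is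
`𝒯_{n,m}`-measurable it is the conditional expectation of every `η_{k,l} f` with `k ≤ n`, `l ≤ m`.
-/

section MatrixEmpDist

variable {S : Type*} [MeasurableSpace S]

noncomputable def matrixEmpDist (u v : ℕ) (x : ℕ × ℕ → S) : Measure S :=
  ((u * v : ℕ) : ℝ≥0∞)⁻¹ •
    ∑ i ∈ Finset.range u, ∑ j ∈ Finset.range v, Measure.dirac (x (i, j))

lemma empDist2_eq_matrixEmpDist {Ω : Type*} (X : ℕ → ℕ → Ω → S) (u v : ℕ) (ω : Ω) :
    empDist2 X u v ω = matrixEmpDist u v (fun ij => X ij.1 ij.2 ω) := rfl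

lemma measurable_matrixEmpDist (u v : ℕ) : Measurable (matrixEmpDist (S := S) u v) := by
  refine Measure.measurable_of_measurable_coe _ fun s hs => ?_
  simp only [matrixEmpDist, Measure.smul_apply, Measure.finsetSum_apply,
    Measure.dirac_apply' _ hs, smul_eq_mul]
  exact (Finset.measurable_sum _ fun i _ => Finset.measurable_sum _ fun j _ =>
    (measurable_one.indicator hs).comp (measurable_pi_apply (i, j))).const_mul _

lemma integral_matrixEmpDist {f : S → ℝ} (hf : Measurable f) (u v : ℕ) (x : ℕ × ℕ → S) :
    ∫ a, f a ∂matrixEmpDist u v x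
      = ((u * v : ℕ) : ℝ)⁻¹ * ∑ i ∈ Finset.range u, ∑ j ∈ Finset.range v, f (x (i, j)) := by
  have hdirac : ∀ a, Integrable f (Measure.dirac a) := fun a =>
    integrable_dirac' hf.stronglyMeasurable enorm_lt_top
  rw [matrixEmpDist, integral_smul_measure, integral_finsetSum_measure fun i _ =>
    integrable_finsetSum_measure.mpr fun j _ => hdirac _]
  simp_rw [integral_finsetSum_measure fun j _ => hdirac _,
    integral_dirac' f _ hf.stronglyMeasurable, ENNReal.toReal_inv, ENNReal.toReal_natCast,
    smul_eq_mul]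

lemma matrixEmpDist_comp_perm {u v : ℕ} {p q : Equiv.Perm ℕ} (hp : ∀ a, p a < u ↔ a < u)
    (hq : ∀ b, q b < v ↔ b < v) (x : ℕ × ℕ → S) :
    matrixEmpDist u v (fun ij => x (p ij.1, q ij.2)) = matrixEmpDist u v x := by
  unfold matrixEmpDist
  congr 1
  calc ∑ a ∈ Finset.range u, ∑ b ∈ Finset.range v, Measure.dirac (x (p a, q b))
      = ∑ a ∈ Finset.range u, ∑ b ∈ Finset.range v, Measure.dirac (x (a, q b)) :=
        Finset.sum_equiv p (fun a => by simp [hp]) fun _ _ => rfl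
    _ = ∑ a ∈ Finset.range u, ∑ b ∈ Finset.range v, Measure.dirac (x (a, b)) :=
        Finset.sum_congr rfl fun _ _ => Finset.sum_equiv q (fun b => by simp [hq]) fun _ _ => rfl

lemma Equiv.swap_apply_lt_iff {a b u : ℕ} (ha : a < u) (hb : b < u) (x : ℕ) :
    Equiv.swap a b x < u ↔ x < u := by
  rw [Equiv.swap_apply_def]
  split_ifs <;> omega

noncomputable def tailEmpDist (n m : ℕ) (x : ℕ × ℕ → S) :
    {uv : ℕ × ℕ // n ≤ uv.1 ∧ m ≤ uv.2} → Measure S :=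
  fun uv => matrixEmpDist uv.1.1 uv.1.2 x

lemma measurable_tailEmpDist (n m : ℕ) : Measurable (tailEmpDist (S := S) n m) :=
  measurable_pi_lambda _ fun uv => measurable_matrixEmpDist uv.1.1 uv.1.2

lemma tailEmpDist_comp_swap {n m i j : ℕ} (hi : i < n) (hj : j < m) (x : ℕ × ℕ → S) :
    tailEmpDist n m (fun ij => x (Equiv.swap 0 i ij.1, Equiv.swap 0 j ij.2))
      = tailEmpDist n m x :=
  funext fun uv => matrixEmpDist_comp_perm
    (Equiv.swap_apply_lt_iff (by omega) (hi.trans_le uv.2.1))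
    (Equiv.swap_apply_lt_iff (by omega) (hj.trans_le uv.2.2)) x

end MatrixEmpDist

lemma Measure.measurable_integral {S : Type*} [MeasurableSpace S] {f : S → ℝ}
    (hf : Measurable f) : Measurable fun μ : Measure S => ∫ x, f x ∂μ :=
  (hf.stronglyMeasurable.integral_kernel (κ := ⟨id, measurable_id⟩)).measurable

lemma setIntegral_comp_preimage_of_map_eq {Ω E : Type*} [MeasurableSpace Ω] [MeasurableSpace E]
    {P : Measure Ω} {M : Ω → E} {T : E → E} (hM : Measurable M) (hT : Measurable T)
    (hmap : P.map (T ∘ M) = P.map M) {B : Set E} (hB : MeasurableSet B) (hTB : T ⁻¹' B = B)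
    {g : E → ℝ} (hg : Measurable g) :
    ∫ ω in M ⁻¹' B, g (T (M ω)) ∂P = ∫ ω in M ⁻¹' B, g (M ω) ∂P := by
  calc ∫ ω in M ⁻¹' B, g (T (M ω)) ∂P
      = ∫ ω in (T ∘ M) ⁻¹' B, g ((T ∘ M) ω) ∂P := by
        rw [Set.preimage_comp, hTB, Function.comp_def]
    _ = ∫ y in B, g y ∂P.map (T ∘ M) :=
        (setIntegral_map hB hg.aestronglyMeasurable (hT.comp hM).aemeasurable).symm
    _ = ∫ ω in M ⁻¹' B, g (M ω) ∂P := by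
        rw [hmap, setIntegral_map hB hg.aestronglyMeasurable hM.aemeasurable]

section TailField2

variable {Ω S : Type*} [MeasurableSpace S] {X : ℕ → ℕ → Ω → S}

lemma tailField2_le_comap_tailEmpDist (n m : ℕ) :
    tailField2 X n m ≤
      MeasurableSpace.comap (fun ω => tailEmpDist n m fun ij => X ij.1 ij.2 ω) inferInstance := by
  refine iSup₂_le fun u hu => iSup₂_le fun v hv => ?_
  rw [show empDist2 X u v = (fun η => η ⟨(u, v), hu, hv⟩) ∘
      fun ω => tailEmpDist n m fun ij => X ij.1 ij.2 ω from rfl, ← MeasurableSpace.comap_comp]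
  exact MeasurableSpace.comap_mono (measurable_pi_apply _).comap_le

lemma stronglyMeasurable_tailField2_integral_empDist2 {f : S → ℝ} (hf : Measurable f)
    (n m : ℕ) : StronglyMeasurable[tailField2 X n m] fun ω => ∫ x, f x ∂empDist2 X n m ω := by
  have hη : Measurable[tailField2 X n m] (empDist2 X n m) :=
    Measurable.of_comap_le (le_iSup₂_of_le n le_rfl (le_iSup₂_of_le m le_rfl le_rfl))
  exact ((Measure.measurable_integral hf).comp hη).stronglyMeasurable

variable [MeasurableSpace Ω] {P : Measure Ω}

lemma tailField2_le (hmeas : ∀ i j, Measurable (X i j)) (n m : ℕ) :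
    tailField2 X n m ≤ ‹MeasurableSpace Ω› :=
  (tailField2_le_comap_tailEmpDist n m).trans <| Measurable.comap_le <|
    (measurable_tailEmpDist n m).comp <| measurable_pi_lambda _ fun ij => hmeas ij.1 ij.2

lemma integrable_integral_empDist2 {f : S → ℝ} (hf : Measurable f)
    (hint : ∀ i j, Integrable (fun ω => f (X i j ω)) P) (u v : ℕ) :
    Integrable (fun ω => ∫ x, f x ∂empDist2 X u v ω) P := by
  simp_rw [empDist2_eq_matrixEmpDist, integral_matrixEmpDist hf]
  exact (integrable_finsetSum _ fun i _ => integrable_finsetSum _ fun j _ =>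
    hint i j).const_mul _

lemma setIntegral_entry_eq_of_sepExchangeable (hmeas : ∀ i j, Measurable (X i j))
    (hexch : SepExchangeable P X) {f : S → ℝ} (hf : Measurable f) {n m i j : ℕ}
    (hi : i < n) (hj : j < m) {A : Set Ω} (hA : MeasurableSet[tailField2 X n m] A) :
    ∫ ω in A, f (X i j ω) ∂P = ∫ ω in A, f (X 0 0 ω) ∂P := by
  obtain ⟨B, hB, rfl⟩ := tailField2_le_comap_tailEmpDist n m _ hA
  have hM : Measurable fun ω (ij : ℕ × ℕ) => X ij.1 ij.2 ω :=
    measurable_pi_lambda _ fun ij => hmeas ij.1 ij.2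
  let T : (ℕ × ℕ → S) → ℕ × ℕ → S := fun x ij => x (Equiv.swap 0 i ij.1, Equiv.swap 0 j ij.2)
  have hmap : P.map (T ∘ fun ω ij => X ij.1 ij.2 ω) = P.map fun ω ij => X ij.1 ij.2 ω :=
    hexch (Equiv.swap 0 i) (Equiv.swap 0 j)
  have key := setIntegral_comp_preimage_of_map_eq hM
    (measurable_pi_lambda _ fun _ => measurable_pi_apply _) hmap
    ((measurable_tailEmpDist n m) hB)
    (by ext x; simp only [Set.mem_preimage, tailEmpDist_comp_swap hi hj])
    (g := fun x => f (x (i, j))) (hf.comp (measurable_pi_apply (i, j)))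
  simp only [Equiv.swap_apply_right] at key
  exact key.symm

lemma setIntegral_integral_empDist2_of_sepExchangeable (hmeas : ∀ i j, Measurable (X i j))
    (hexch : SepExchangeable P X) {f : S → ℝ} (hf : Measurable f)
    (hint : ∀ i j, Integrable (fun ω => f (X i j ω)) P) {u v n m : ℕ} (hu : 1 ≤ u) (hun : u ≤ n)
    (hv : 1 ≤ v) (hvm : v ≤ m) {A : Set Ω} (hA : MeasurableSet[tailField2 X n m] A) :
    ∫ ω in A, ∫ x, f x ∂empDist2 X u v ω ∂P = ∫ ω in A, f (X 0 0 ω) ∂P := by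
  have huv : ((u * v : ℕ) : ℝ) ≠ 0 := by positivity
  simp_rw [empDist2_eq_matrixEmpDist, integral_matrixEmpDist hf]
  rw [integral_const_mul, integral_finsetSum _ fun i _ => integrable_finsetSum _ fun j _ =>
    (hint i j).integrableOn]
  calc ((u * v : ℕ) : ℝ)⁻¹ *
        ∑ i ∈ Finset.range u, ∫ ω in A, ∑ j ∈ Finset.range v, f (X i j ω) ∂P
      = ((u * v : ℕ) : ℝ)⁻¹ *
          ∑ _i ∈ Finset.range u, ∑ _j ∈ Finset.range v, ∫ ω in A, f (X 0 0 ω) ∂P := by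
        refine congrArg _ (Finset.sum_congr rfl fun i hi => ?_)
        rw [integral_finsetSum _ fun j _ => (hint i j).integrableOn]
        refine Finset.sum_congr rfl fun j hj => ?_
        exact setIntegral_entry_eq_of_sepExchangeable hmeas hexch hf
          ((Finset.mem_range.mp hi).trans_le hun) ((Finset.mem_range.mp hj).trans_le hvm) hA
    _ = ∫ ω in A, f (X 0 0 ω) ∂P := by
        simp only [Finset.sum_const, Finset.card_range, nsmul_eq_mul]
        field_simp
        push_cast
        ring

end TailField2

theorem empDist2_isReverseMVM2_of_sepExchangeable_general
    {Ω S : Type*} [MeasurableSpace Ω] [MeasurableSpace S]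
    (P : Measure Ω) [IsProbabilityMeasure P] (X : ℕ → ℕ → Ω → S)
    (hmeas : ∀ i j, Measurable (X i j)) (hexch : SepExchangeable P X) :
    IsReverseMVM2 P X := by
  rintro f hf ⟨C, hC⟩ k l n m hk hkn hl hlm
  have hint : ∀ i j, Integrable (fun ω => f (X i j ω)) P := fun i j =>
    .of_bound (hf.comp (hmeas i j)).aestronglyMeasurable C (.of_forall fun ω => hC _)
  have hle := tailField2_le hmeas n m
  refine (ae_eq_condExp_of_forall_setIntegral_eq hle (integrable_integral_empDist2 hf hint k l)
    (fun _ _ _ => (integrable_integral_empDist2 hf hint n m).integrableOn) (fun A hA _ => ?_)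
    (stronglyMeasurable_tailField2_integral_empDist2 hf n m).aestronglyMeasurable).symm
  rw [setIntegral_integral_empDist2_of_sepExchangeable hmeas hexch hf hint
      (hk.trans hkn) le_rfl (hl.trans hlm) le_rfl hA,
    setIntegral_integral_empDist2_of_sepExchangeable hmeas hexch hf hint hk hkn hl hlm hA]

/-- The empirical distributions of a separately exchangeable random matrix
with values in a standard Borel space form a reverse measure-valued martingale on `ℕ²`. -/
theorem empDist2_isReverseMVM2_of_sepExchangeable
    {Ω S : Type*} [MeasurableSpace Ω] [MeasurableSpace S] [StandardBorelSpace S]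
    (P : Measure Ω) [IsProbabilityMeasure P] (X : ℕ → ℕ → Ω → S)
    (hmeas : ∀ i j, Measurable (X i j)) (hexch : SepExchangeable P X) :
    IsReverseMVM2 P X :=
  empDist2_isReverseMVM2_of_sepExchangeable_general P X hmeas hexch
end

section
/- Let ξ = (ξ_1, ξ_2, …) be an exchangeable sequence of integrable real-valued random variables, let S_n = ∑_{i=1}^n ξ_i, and let 𝒯_n = σ(S_k : k ≥ n). Then (S_n/n, 𝒯_n) is a reverse martingale: for all n ≥ 1, E[S_n/n | 𝒯_{n+1}] = S_{n+1}/(n+1) almost surely. -/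
open MeasureTheory ProbabilityTheory
open scoped ENNReal

/-- The partial sum `S_n = ∑_{i=1}^n ξ_i` (with `ξ` indexed from `0`). -/
def partialSum {Ω : Type*} (ξ : ℕ → Ω → ℝ) (n : ℕ) (ω : Ω) : ℝ :=
  ∑ i ∈ Finset.range n, ξ i ω

/-- The tail σ-field `𝒯_n = σ(S_k : k ≥ n)` generated by the partial sums from `n` on. -/
noncomputable def sumTailField {Ω : Type*} (ξ : ℕ → Ω → ℝ) (n : ℕ) : MeasurableSpace Ω :=
  ⨆ k, ⨆ _ : n ≤ k, MeasurableSpace.comap (partialSum ξ k) inferInstance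

/-!
For `i, j < n` the transposition of `i` and `j` fixes every `S_k` with `k ≥ n`, so exchangeability
gives `E[ξ_i ; A] = E[ξ_j ; A]` on the cylinder sets `A` generating `𝒯_n`, and then on all of `𝒯_n`
by a π-λ argument. Hence all `E[ξ_i | 𝒯_n]`, `i < n`, agree with some `Y`, so that
`E[S_m | 𝒯_n] = m Y` for `m ≤ n`; since `S_n` is `𝒯_n`-measurable, `S_n = n Y`, and the claim
follows with `n + 1` in place of `n`.
-/

open Finset

theorem setIntegral_eq_of_isPiSystem {α E : Type*} [NormedAddCommGroup E] [NormedSpace ℝ E]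
    {m m₀ : MeasurableSpace α} (hm : m ≤ m₀) {μ : Measure α} {f g : α → E}
    (hf : Integrable f μ) (hg : Integrable g μ) {s : Set (Set α)}
    (h_eq : m = MeasurableSpace.generateFrom s) (h_inter : IsPiSystem s)
    (basic : ∀ t ∈ s, ∫ x in t, f x ∂μ = ∫ x in t, g x ∂μ)
    (h_univ : ∫ x, f x ∂μ = ∫ x, g x ∂μ) :
    ∀ t, MeasurableSet[m] t → ∫ x in t, f x ∂μ = ∫ x in t, g x ∂μ := by
  refine MeasurableSpace.induction_on_inter h_eq h_inter (by simp) basic ?_ ?_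
  · intro t ht h_t
    rw [setIntegral_compl (hm t ht) hf, setIntegral_compl (hm t ht) hg, h_univ, h_t]
  · intro t htd htm h_t
    rw [integral_iUnion (fun i => hm _ (htm i)) htd hf.integrableOn,
      integral_iUnion (fun i => hm _ (htm i)) htd hg.integrableOn]
    exact tsum_congr h_t

theorem setIntegral_preimage_eq_of_map_eq {Ω β E : Type*} [MeasurableSpace Ω]
    [MeasurableSpace β] [NormedAddCommGroup E] [NormedSpace ℝ E] {P : Measure Ω}
    {Φ Ψ : Ω → β} (hΦ : AEMeasurable Φ P) (hΨ : AEMeasurable Ψ P)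
    (hlaw : P.map Φ = P.map Ψ) {f : β → E} (hf : StronglyMeasurable f)
    {C : Set β} (hC : MeasurableSet C) :
    ∫ ω in Φ ⁻¹' C, f (Φ ω) ∂P = ∫ ω in Ψ ⁻¹' C, f (Ψ ω) ∂P := by
  rw [← setIntegral_map hC hf.aestronglyMeasurable hΦ, hlaw,
    setIntegral_map hC hf.aestronglyMeasurable hΨ]

theorem sum_range_comp_swap {M : Type*} [AddCommMonoid M] {i j k : ℕ} (hi : i < k) (hj : j < k)
    (f : ℕ → M) : ∑ l ∈ range k, f (Equiv.swap i j l) = ∑ l ∈ range k, f l := by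
  refine Equiv.Perm.sum_comp _ _ _ fun l hl => ?_
  have : l = i ∨ l = j := by
    by_contra! h
    exact hl (Equiv.swap_apply_of_ne_of_ne h.1 h.2)
  rcases this with rfl | rfl <;> simpa

section

variable {Ω : Type*}

theorem partialSum_eq_sum (ξ : ℕ → Ω → ℝ) (n : ℕ) : partialSum ξ n = ∑ i ∈ range n, ξ i := by
  ext ω
  simp [partialSum]

theorem sumTailField_eq_generateFrom (ξ : ℕ → Ω → ℝ) (n : ℕ) :
    sumTailField ξ n = MeasurableSpace.generateFrom
      (piiUnionInter (fun k => {u | MeasurableSet[MeasurableSpace.comap (partialSum ξ k)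
        inferInstance] u}) {k | n ≤ k}) :=
  (generateFrom_piiUnionInter_measurableSet _ _).symm

variable {ξ : ℕ → Ω → ℝ}

theorem measurable_partialSum_sumTailField {n k : ℕ} (hk : n ≤ k) :
    Measurable[sumTailField ξ n] (partialSum ξ k) :=
  Measurable.of_comap_le <| le_iSup₂ (f := fun k (_ : n ≤ k) =>
    MeasurableSpace.comap (partialSum ξ k) inferInstance) k hk

variable [MeasurableSpace Ω] {P : Measure Ω}

theorem measurable_partialSum (hmeas : ∀ i, Measurable (ξ i)) (n : ℕ) :
    Measurable (partialSum ξ n) :=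
  Finset.measurable_sum (range n) fun i _ => hmeas i

theorem integrable_partialSum (hint : ∀ i, Integrable (ξ i) P) (n : ℕ) :
    Integrable (partialSum ξ n) P :=
  integrable_finsetSum (range n) fun i _ => hint i

theorem sumTailField_le (hmeas : ∀ i, Measurable (ξ i)) (n : ℕ) :
    sumTailField ξ n ≤ ‹MeasurableSpace Ω› :=
  iSup₂_le fun k _ => (measurable_partialSum hmeas k).comap_le

end

namespace Exchangeable

variable {Ω : Type*} [MeasurableSpace Ω] {P : Measure Ω}

-- Zero padding turns the finite-dimensional statement into one about laws on `ℕ → S`, where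
-- every `S_k` with `k ≤ N` can be read off.
theorem map_pad_comp {S : Type*} [MeasurableSpace S] [Zero S] {ξ : ℕ → Ω → S}
    (hmeas : ∀ i, Measurable (ξ i)) (hexch : Exchangeable P ξ) {τ : ℕ → ℕ}
    (hτ : Function.Injective τ) (N : ℕ) :
    P.map (fun ω l => if l < N then ξ (τ l) ω else 0)
      = P.map (fun ω l => if l < N then ξ l ω else 0) := by
  let pad : (Fin N → S) → ℕ → S := fun x l => if h : l < N then x ⟨l, h⟩ else 0
  have hmeas_pad : Measurable pad := measurable_pi_lambda _ fun l => by
    by_cases h : l < N <;> simp only [pad, h, dite_true, dite_false] <;> fun_prop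
  have hfactor : ∀ σ : ℕ → ℕ, (fun ω l => if l < N then ξ (σ l) ω else 0)
      = pad ∘ fun ω (a : Fin N) => ξ (σ a) ω := by
    intro σ
    ext ω l
    by_cases h : l < N <;> simp [pad, h]
  have hvec : ∀ σ : ℕ → ℕ, Measurable fun ω (a : Fin N) => ξ (σ a) ω := fun σ =>
    measurable_pi_lambda _ fun a => hmeas _
  rw [hfactor τ, show (fun ω l => if l < N then ξ l ω else 0) = _ from hfactor id,
    ← Measure.map_map hmeas_pad (hvec τ), ← Measure.map_map hmeas_pad (hvec id)]
  exact congrArg (Measure.map pad) (hexch N _ (hτ.comp Fin.val_injective))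

variable {ξ : ℕ → Ω → ℝ}

theorem setIntegral_cylinder_eq (hmeas : ∀ i, Measurable (ξ i)) (hexch : Exchangeable P ξ)
    {n i j : ℕ} (hi : i < n) (hj : j < n) {t : Finset ℕ} (ht : ∀ k ∈ t, n ≤ k)
    {B : ℕ → Set ℝ} (hB : ∀ k ∈ t, MeasurableSet (B k)) :
    ∫ ω in ⋂ k ∈ t, partialSum ξ k ⁻¹' B k, ξ i ω ∂P
      = ∫ ω in ⋂ k ∈ t, partialSum ξ k ⁻¹' B k, ξ j ω ∂P := by
  set N := n + t.sup id
  have htN : ∀ k ∈ t, k ≤ N := fun k hk => (le_sup (f := id) hk).trans (by omega)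
  set σ := Equiv.swap i j
  let Φ : Ω → ℕ → ℝ := fun ω l => if l < N then ξ l ω else 0
  let Ψ : Ω → ℕ → ℝ := fun ω l => if l < N then ξ (σ l) ω else 0
  have hmeas_pad : ∀ τ : ℕ → ℕ, Measurable fun ω (l : ℕ) => if l < N then ξ (τ l) ω else 0 :=
    fun τ => measurable_pi_lambda _ fun l => by
      by_cases h : l < N <;> simp only [h, if_true, if_false] <;> fun_prop
  let C : Set (ℕ → ℝ) := ⋂ k ∈ t, (fun x => ∑ l ∈ range k, x l) ⁻¹' B k
  have hC : MeasurableSet C := MeasurableSet.biInter t.countable_toSet fun k hk =>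
    (Finset.measurable_sum _ fun l _ => measurable_pi_apply l) (hB k hk)
  have hΦC : Φ ⁻¹' C = ⋂ k ∈ t, partialSum ξ k ⁻¹' B k := by
    ext ω
    simp only [C, Φ, Set.mem_preimage, Set.mem_iInter]
    refine forall₂_congr fun k hk => ?_
    rw [partialSum, sum_congr rfl fun l hl => if_pos ((mem_range.1 hl).trans_le (htN k hk))]
  have hΨC : Ψ ⁻¹' C = ⋂ k ∈ t, partialSum ξ k ⁻¹' B k := by
    ext ω
    simp only [C, Ψ, Set.mem_preimage, Set.mem_iInter]
    refine forall₂_congr fun k hk => ?_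
    rw [partialSum, sum_congr rfl fun l hl => if_pos ((mem_range.1 hl).trans_le (htN k hk)),
      sum_range_comp_swap (hi.trans_le (ht k hk)) (hj.trans_le (ht k hk)) (fun l => ξ l ω)]
  have h := setIntegral_preimage_eq_of_map_eq (Φ := Φ) (Ψ := Ψ) (hmeas_pad id).aemeasurable
    (hmeas_pad σ).aemeasurable (hexch.map_pad_comp hmeas σ.injective N).symm
    (measurable_pi_apply i).stronglyMeasurable hC
  rw [hΦC, hΨC] at h
  simpa [Φ, Ψ, σ, show i < N by omega] using h

theorem setIntegral_eq_of_measurableSet_sumTailField (hmeas : ∀ i, Measurable (ξ i))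
    (hint : ∀ i, Integrable (ξ i) P) (hexch : Exchangeable P ξ) {n i j : ℕ} (hi : i < n)
    (hj : j < n) {s : Set Ω} (hs : MeasurableSet[sumTailField ξ n] s) :
    ∫ ω in s, ξ i ω ∂P = ∫ ω in s, ξ j ω ∂P := by
  have hcyl := fun (t : Finset ℕ) ht (B : ℕ → Set ℝ) hB =>
    hexch.setIntegral_cylinder_eq (P := P) hmeas hi hj (t := t) ht (B := B) hB
  refine setIntegral_eq_of_isPiSystem (sumTailField_le hmeas n) (hint i) (hint j)
    (sumTailField_eq_generateFrom ξ n) (isPiSystem_piiUnionInter _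
      (fun k => @MeasurableSpace.isPiSystem_measurableSet Ω (.comap (partialSum ξ k) _)) _)
    ?_ (by simpa using hcyl ∅ (by simp) (fun _ => Set.univ) (by simp)) s hs
  rintro u ⟨t, ht, f, hf, rfl⟩
  choose! B hB hfB using fun k (hk : k ∈ t) => MeasurableSpace.measurableSet_comap.mp (hf k hk)
  rw [← Set.iInter₂_congr fun k hk => hfB k hk]
  exact hcyl t (fun k hk => ht hk) B hB

theorem condExp_sumTailField_ae_eq [IsFiniteMeasure P] (hmeas : ∀ i, Measurable (ξ i))
    (hint : ∀ i, Integrable (ξ i) P) (hexch : Exchangeable P ξ) {n i j : ℕ} (hi : i < n)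
    (hj : j < n) :
    P[ξ i | sumTailField ξ n] =ᵐ[P] P[ξ j | sumTailField ξ n] := by
  have hle := sumTailField_le hmeas n
  refine ae_eq_condExp_of_forall_setIntegral_eq hle (hint j)
    (fun s _ _ => integrable_condExp.integrableOn) (fun s hs _ => ?_)
    stronglyMeasurable_condExp.aestronglyMeasurable
  rw [setIntegral_condExp hle (hint i) hs]
  exact hexch.setIntegral_eq_of_measurableSet_sumTailField hmeas hint hi hj hs

theorem condExp_partialSum_ae_eq_smul [IsFiniteMeasure P] (hmeas : ∀ i, Measurable (ξ i))
    (hint : ∀ i, Integrable (ξ i) P) (hexch : Exchangeable P ξ) {n m j : ℕ} (hm : m ≤ n)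
    (hj : j < n) :
    P[partialSum ξ m | sumTailField ξ n] =ᵐ[P] (m : ℝ) • P[ξ j | sumTailField ξ n] := by
  have hterms : ∀ᵐ ω ∂P, ∀ l ∈ range m,
      P[ξ l | sumTailField ξ n] ω = P[ξ j | sumTailField ξ n] ω :=
    (Filter.eventually_all_finset _).2 fun l hl =>
      hexch.condExp_sumTailField_ae_eq hmeas hint ((mem_range.1 hl).trans_le hm) hj
  rw [partialSum_eq_sum]
  filter_upwards [condExp_finsetSum (s := range m) (fun l _ => hint l) (sumTailField ξ n),
    hterms] with ω hsum hω
  simp [hsum, sum_congr rfl hω]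

end Exchangeable

/-- For an exchangeable sequence of integrable real random variables,
`(S_n / n, 𝒯_n)` is a reverse martingale: `E[S_n/n | 𝒯_{n+1}] = S_{n+1}/(n+1)` a.s. -/
theorem reverse_martingale_partialSum
    {Ω : Type*} [MeasurableSpace Ω] (P : Measure Ω) [IsProbabilityMeasure P]
    (ξ : ℕ → Ω → ℝ) (hmeas : ∀ i, Measurable (ξ i)) (hint : ∀ i, Integrable (ξ i) P)
    (hexch : Exchangeable P ξ) :
    ∀ n : ℕ, 1 ≤ n →
      P[(fun ω => partialSum ξ n ω / n) | sumTailField ξ (n + 1)]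
        =ᵐ[P] fun ω => partialSum ξ (n + 1) ω / (n + 1) := by
  intro n hn
  set Y := P[ξ 0 | sumTailField ξ (n + 1)]
  have hSn : P[partialSum ξ n | sumTailField ξ (n + 1)] =ᵐ[P] (n : ℝ) • Y :=
    hexch.condExp_partialSum_ae_eq_smul hmeas hint (by omega) (by omega)
  have hSn1 : partialSum ξ (n + 1) =ᵐ[P] ((n + 1 : ℕ) : ℝ) • Y := by
    rw [← condExp_of_stronglyMeasurable (sumTailField_le hmeas (n + 1))
      (measurable_partialSum_sumTailField le_rfl).stronglyMeasurable
      (integrable_partialSum hint _)]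
    exact hexch.condExp_partialSum_ae_eq_smul hmeas hint le_rfl n.succ_pos
  have hn0 : (n : ℝ) ≠ 0 := by positivity
  calc P[(fun ω => partialSum ξ n ω / n) | sumTailField ξ (n + 1)]
      = P[(n : ℝ)⁻¹ • partialSum ξ n | sumTailField ξ (n + 1)] := by
        congr 1; ext ω; simp [div_eq_inv_mul]
    _ =ᵐ[P] (n : ℝ)⁻¹ • P[partialSum ξ n | sumTailField ξ (n + 1)] := condExp_smul _ _ _
    _ =ᵐ[P] Y := by
        filter_upwards [hSn] with ω hω
        simp [hω, hn0]
    _ =ᵐ[P] fun ω => partialSum ξ (n + 1) ω / (n + 1) := by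
        filter_upwards [hSn1] with ω hω
        rw [hω, Pi.smul_apply, smul_eq_mul]
        push_cast
        field_simp
end

section
/- Let ξ = (ξ_1, ξ_2, …) be an exchangeable sequence of integrable real-valued random variables, let S_n = ∑_{i=1}^n ξ_i, and let 𝒯_n = σ(S_k : k ≥ n). Then for every n and all j, k ≤ n+1, E[ξ_j | 𝒯_{n+1}] = E[ξ_k | 𝒯_{n+1}] almost surely. -/
open MeasureTheory ProbabilityTheory
open scoped ENNReal

/-! Swapping `ξ j` and `ξ k` does not change the law of the whole sequence (exchangeability
fixes all finite-dimensional marginals, and these determine the law), and for `j, k ≤ n` it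
leaves every partial sum `S_m` with `m > n` unchanged. Hence `(ξ j, (S_m)_{m > n})` and
`(ξ k, (S_m)_{m > n})` have the same law, so `ξ j` and `ξ k` have the same integral over every
set of `𝒯_{n+1}`. -/

namespace Exchangeable

variable {Ω S : Type*} [MeasurableSpace Ω] [MeasurableSpace S] {P : Measure Ω} {ξ : ℕ → Ω → S}

theorem map_comp_eq_of_finite {ι : Type*} [Finite ι] (hmeas : ∀ i, Measurable (ξ i))
    (hexch : Exchangeable P ξ) {τ τ' : ι → ℕ} (hτ : Function.Injective τ)
    (hτ' : Function.Injective τ') :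
    P.map (fun ω i => ξ (τ i) ω) = P.map (fun ω i => ξ (τ' i) ω) := by
  obtain ⟨m, ⟨e⟩⟩ := Finite.exists_equiv_fin ι
  have hg : Measurable fun (w : Fin m → S) (i : ι) => w (e i) := by fun_prop
  have through_fin : ∀ σ : ι → ℕ, Function.Injective σ →
      P.map (fun ω i => ξ (σ i) ω) = (P.map fun ω (a : Fin m) => ξ a ω).map fun w i => w (e i) := by
    intro σ hσ
    rw [← hexch m _ (hσ.comp e.symm.injective), Measure.map_map hg (by fun_prop)]
    simp [Function.comp_def]
  rw [through_fin τ hτ, through_fin τ' hτ']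

theorem map_comp_eq [IsFiniteMeasure P] (hmeas : ∀ i, Measurable (ξ i))
    (hexch : Exchangeable P ξ) {σ : ℕ → ℕ} (hσ : Function.Injective σ) :
    P.map (fun ω i => ξ (σ i) ω) = P.map (fun ω i => ξ i ω) := by
  refine IsProjectiveLimit.unique (P := fun J : Finset ℕ => P.map fun ω (j : J) => ξ j ω)
    (fun J => ?_) (fun J => ?_)
  · rw [Measure.map_map (Finset.measurable_restrict J) (by fun_prop)]
    exact map_comp_eq_of_finite hmeas hexch (hσ.comp Subtype.val_injective) Subtype.val_injective
  · rw [Measure.map_map (Finset.measurable_restrict J) (by fun_prop)]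
    rfl

end Exchangeable

section EqualLaws

variable {Ω E F V : Type*} {m₀ : MeasurableSpace Ω} [MeasurableSpace E] [MeasurableSpace F]
  [NormedAddCommGroup V] [NormedSpace ℝ V] {P : Measure Ω} {X X' : Ω → E} {G : E → F}
  {f : E → V}

theorem setIntegral_comp_eq_of_map_eq (hX : Measurable X) (hX' : Measurable X')
    (hlaw : P.map X = P.map X') (hG : Measurable G) (hGX : G ∘ X' = G ∘ X)
    (hf : AEStronglyMeasurable f (P.map X)) {A : Set Ω}
    (hA : MeasurableSet[MeasurableSpace.comap (G ∘ X) inferInstance] A) :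
    ∫ ω in A, f (X ω) ∂P = ∫ ω in A, f (X' ω) ∂P := by
  obtain ⟨B, hB, rfl⟩ := hA
  have hGB : MeasurableSet (G ⁻¹' B) := hG hB
  calc ∫ ω in (G ∘ X) ⁻¹' B, f (X ω) ∂P
      = ∫ x in G ⁻¹' B, f x ∂P.map X := (setIntegral_map hGB hf hX.aemeasurable).symm
    _ = ∫ x in G ⁻¹' B, f x ∂P.map X' := by rw [hlaw]
    _ = ∫ ω in (G ∘ X') ⁻¹' B, f (X' ω) ∂P :=
      setIntegral_map hGB (hlaw ▸ hf) hX'.aemeasurable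
    _ = ∫ ω in (G ∘ X) ⁻¹' B, f (X' ω) ∂P := by rw [hGX]

theorem condExp_comp_ae_eq_of_map_eq [CompleteSpace V] [IsFiniteMeasure P] (hX : Measurable X)
    (hX' : Measurable X') (hlaw : P.map X = P.map X') (hG : Measurable G) (hGX : G ∘ X' = G ∘ X)
    (hf : Integrable f (P.map X)) {m : MeasurableSpace Ω}
    (hm : m ≤ MeasurableSpace.comap (G ∘ X) inferInstance) :
    P[f ∘ X | m] =ᵐ[P] P[f ∘ X' | m] := by
  have hm₀ : m ≤ m₀ := hm.trans (hG.comp hX).comap_le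
  have hfX' : Integrable (f ∘ X') P :=
    (integrable_map_measure (hlaw ▸ hf.1) hX'.aemeasurable).1 (hlaw ▸ hf)
  refine (ae_eq_condExp_of_forall_setIntegral_eq hm₀
    ((integrable_map_measure hf.1 hX.aemeasurable).1 hf)
    (fun _ _ _ => integrable_condExp.integrableOn) (fun A hA _ => ?_)
    stronglyMeasurable_condExp.aestronglyMeasurable).symm
  rw [setIntegral_condExp hm₀ hfX' hA]
  exact (setIntegral_comp_eq_of_map_eq hX hX' hlaw hG hGX hf.1 (hm A hA)).symm

end EqualLaws

def tailSums (n : ℕ) (x : ℕ → ℝ) (m : ℕ) : ℝ :=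
  ∑ i ∈ Finset.range (m + n), x i

theorem measurable_tailSums (n : ℕ) : Measurable (tailSums n) :=
  measurable_pi_lambda _ fun _ => Finset.measurable_sum _ fun i _ => measurable_pi_apply i

theorem tailSums_comp_swap {n j k : ℕ} (hj : j < n) (hk : k < n) (x : ℕ → ℝ) :
    tailSums n (x ∘ Equiv.swap j k) = tailSums n x := by
  funext m
  refine Equiv.Perm.sum_comp _ _ _ fun i hi => ?_
  obtain ⟨-, rfl | rfl⟩ := Equiv.swap_apply_ne_self_iff.1 hi <;>
    simp only [Finset.coe_range, Set.mem_Iio] <;> omega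

theorem sumTailField_le_comap_tailSums {Ω : Type*} (ξ : ℕ → Ω → ℝ) (n : ℕ) :
    sumTailField ξ n ≤ MeasurableSpace.comap (tailSums n ∘ fun ω i => ξ i ω) inferInstance := by
  refine iSup₂_le fun k hk => ?_
  obtain ⟨m, rfl⟩ := Nat.exists_eq_add_of_le' hk
  change MeasurableSpace.comap ((fun x => x m) ∘ tailSums n ∘ fun ω i => ξ i ω) _ ≤ _
  rw [← MeasurableSpace.comap_comp]
  exact MeasurableSpace.comap_mono (measurable_pi_apply m).comap_le

/-- For an exchangeable sequence of integrable real random variables and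
the tail σ-fields `𝒯_n = σ(S_k : k ≥ n)` of the partial sums, the conditional expectations
`E[ξ_j | 𝒯_{n+1}]`, for one-based `j ≤ n + 1`, all coincide a.s.
(With zero-based indexing this reads: `E[ξ_j | 𝒯_{n+1}] = E[ξ_k | 𝒯_{n+1}]` for `j, k ≤ n`.) -/
theorem condexp_eq_of_exchangeable
    {Ω : Type*} [MeasurableSpace Ω] (P : Measure Ω) [IsProbabilityMeasure P]
    (ξ : ℕ → Ω → ℝ) (hmeas : ∀ i, Measurable (ξ i)) (hint : ∀ i, Integrable (ξ i) P)
    (hexch : Exchangeable P ξ) :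
    ∀ n j k : ℕ, j ≤ n → k ≤ n →
      P[ξ j | sumTailField ξ (n + 1)] =ᵐ[P] P[ξ k | sumTailField ξ (n + 1)] := by
  intro n j k hj hk
  set X : Ω → ℕ → ℝ := fun ω i => ξ i ω
  have hX : Measurable X := measurable_pi_lambda _ hmeas
  have hlaw : P.map X = P.map (fun ω => X ω ∘ Equiv.swap j k) :=
    (hexch.map_comp_eq hmeas (Equiv.swap j k).injective).symm
  have hsums : tailSums (n + 1) ∘ (fun ω => X ω ∘ Equiv.swap j k) = tailSums (n + 1) ∘ X :=
    funext fun ω => tailSums_comp_swap (by omega) (by omega) (X ω)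
  have hj_int : Integrable (fun x : ℕ → ℝ => x j) (P.map X) :=
    (integrable_map_measure (measurable_pi_apply j).aestronglyMeasurable hX.aemeasurable).2 (hint j)
  simpa only [Function.comp_def, Equiv.swap_apply_left, X] using
    condExp_comp_ae_eq_of_map_eq hX (by fun_prop) hlaw (measurable_tailSums _) hsums hj_int
      (sumTailField_le_comap_tailSums ξ (n + 1))
end
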